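/- arXiv:math/0211290 — 2 statements merged into one kernel-verified Lean document; each statement's English description precedes it below -/
import Mathlib

section
/- If a positive integer N is primitively represented by the form q(t₀,t₁,t₂,t₃) = 2t₀² + t₀t₁ + 5t₁² - 13(t₂² - t₂t₃ + t₃²), and the Legendre symbol (N/13) = 1, then this leads to a contradiction; i.e., q does not primitively represent any positive integer that is a nonzero quadratic residue mod 13. -/
instance : Fact (Nat.Prime 13) := ⟨by norm_num⟩

/-- The quaternary form `q(t) = 2t₀² + t₀t₁ + 5t₁² - 13(t₂² - t₂t₃ + t₃²)` does not
primitively represent any positive integer `N` with Legendre symbol `(N/13) = 1`. -/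
theorem q_no_primitive_QR_representation
    (N : ℤ) (hN : 0 < N) (t : Fin 4 → ℤ)
    (hprim : Int.gcd (Int.gcd (t 0) (t 1)) (Int.gcd (t 2) (t 3)) = 1)
    (hq : 2 * (t 0) ^ 2 + (t 0) * (t 1) + 5 * (t 1) ^ 2
      - 13 * ((t 2) ^ 2 - (t 2) * (t 3) + (t 3) ^ 2) = N)
    (hleg : legendreSym 13 N = 1) : False := by
  have hN0 : (N : ZMod 13) ≠ 0 := by
    intro h
    have := (legendreSym.eq_zero_iff 13 N).mpr h
    omega
  have hsq : IsSquare (N : ZMod 13) := (legendreSym.eq_one_iff 13 hN0).mp hleg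
  obtain ⟨r, hr⟩ := hsq
  have hr0 : r ≠ 0 := by
    intro h; apply hN0; rw [hr, h, mul_zero]
  have h8 : (8 * N : ℤ) = (4 * t 0 + t 1) ^ 2 + 39 * (t 1) ^ 2
      - 104 * ((t 2) ^ 2 - (t 2) * (t 3) + (t 3) ^ 2) := by ring_nf; linarith [hq]
  have key : (8 : ZMod 13) * (r * r) = ((4 * t 0 + t 1 : ℤ) : ZMod 13) ^ 2 := by
    have := congrArg (fun z : ℤ => (z : ZMod 13)) h8
    push_cast at this
    rw [hr] at this
    push_cast
    rw [this, show (39 : ZMod 13) = 0 from by decide,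
      show (104 : ZMod 13) = 0 from by decide]
    ring
  have : ∀ x y : ZMod 13, x ≠ 0 → (8 : ZMod 13) * (x * x) ≠ y ^ 2 := by decide
  exact this r _ hr0 key
end

section
/- Let (L,q) be a quadratic ℤ-lattice of rank 4 inside the space W with dual lattice L# = {l ∈ W : tr(l* L) ⊆ ℤ} and quadratic form q#(l) = D·d₀(Λ₀)·nr(l). Then the map φ(l₁ ⊗ l₂) = D·d₀(Λ₀)·l₁* l₂ extends to a ℤ-algebra homomorphism from the even Clifford algebra C₀(L#, q#) to A, because φ vanishes on all elements of the form x ⊗ x - q#(x) for x ∈ L#. -/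
open Quaternion

/-- Let `A = ℍ[k, c₁, c₂]` be a quaternion algebra with an involution `σ` of type 2,
let `L#` be a `ℤ`-lattice inside `W = {β : star (σ β) = β}` with integral quadratic
form `q#` satisfying `q#(x) = c · nr(x)` for `c = D·d₀(Λ₀)` (so that
`φ(x ⊗ x) = c · x* x = q#(x)` for all `x ∈ L#`).  Then the map
`φ(l₁ ⊗ l₂) = c · l₁* l₂` extends to a `ℤ`-algebra homomorphism from the even
Clifford algebra `C₀(L#, q#)` to `A`. -/
theorem even_clifford_map_to_quaternions
    (k : Type*) [Field k] [CharZero k] (c₁ c₂ : k)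
    (σ : ℍ[k, c₁, c₂] ≃+* ℍ[k, c₁, c₂]) (hinv : ∀ x, σ (σ x) = x)
    (c : ℤ) (hc : 0 < c)
    (L : Submodule ℤ ℍ[k, c₁, c₂])
    (hL : ∀ x ∈ L, star (σ x) = x)
    (Q : QuadraticForm ℤ L)
    (hQ : ∀ x : L, (c : ℍ[k, c₁, c₂]) * (star (x : ℍ[k, c₁, c₂]) * (x : ℍ[k, c₁, c₂]))
      = ((Q x : ℤ) : ℍ[k, c₁, c₂])) :
    ∃ F : CliffordAlgebra.even Q →ₐ[ℤ] ℍ[k, c₁, c₂],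
      ∀ l₁ l₂ : L, F ((CliffordAlgebra.even.ι Q).bilin l₁ l₂)
        = (c : ℍ[k, c₁, c₂]) * (star (l₁ : ℍ[k, c₁, c₂]) * (l₂ : ℍ[k, c₁, c₂])) := by
  set C : ℍ[k, c₁, c₂] := (c : ℍ[k, c₁, c₂]) with hC
  let f : L →ₗ[ℤ] L →ₗ[ℤ] ℍ[k, c₁, c₂] :=
    LinearMap.mk₂ ℤ (fun l₁ l₂ => C * (star (l₁ : ℍ[k, c₁, c₂]) * (l₂ : ℍ[k, c₁, c₂])))
      (by intro m₁ m₂ n; simp [star_add, add_mul, mul_add])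
      (by
        intro r m n
        simp only [Submodule.coe_smul, zsmul_eq_mul]
        rw [star_mul, star_intCast]
        rw [← (Int.cast_commute r (star (m : ℍ[k, c₁, c₂]))).eq, mul_assoc,
          ((Int.cast_commute r C).symm).left_comm])
      (by intro m n₁ n₂; simp [mul_add])
      (by
        intro r m n
        simp only [Submodule.coe_smul, zsmul_eq_mul]
        rw [((Int.cast_commute r (star (m : ℍ[k, c₁, c₂]))).symm).left_comm,
          ((Int.cast_commute r C).symm).left_comm])
  have hf : ∀ l₁ l₂ : L, f l₁ l₂
      = C * (star (l₁ : ℍ[k, c₁, c₂]) * (l₂ : ℍ[k, c₁, c₂])) := fun _ _ => rfl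
  have Cc : ∀ x : ℍ[k, c₁, c₂], C * x = x * C := fun x => (Int.cast_commute c x).eq
  let E : CliffordAlgebra.EvenHom Q ℍ[k, c₁, c₂] :=
    { bilin := f
      contract := fun m => by
        simp only [hf, hQ m, algebraMap_int_eq, eq_intCast]
      contract_mid := fun l₁ l₂ l₃ => by
        simp only [hf]
        set a := star (l₁ : ℍ[k, c₁, c₂])
        set b := (l₂ : ℍ[k, c₁, c₂])
        set d := star (l₂ : ℍ[k, c₁, c₂])
        set e := (l₃ : ℍ[k, c₁, c₂])
        set T : ℍ[k, c₁, c₂] := ((Q l₂ : ℤ) : ℍ[k, c₁, c₂]) with hT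
        have key : C * (d * b) = T := hQ l₂
        have scs : b * d = d * b := (star_comm_self' b).symm
        have Tc : ∀ x : ℍ[k, c₁, c₂], T * x = x * T := fun x =>
          (Int.cast_commute (Q l₂) x).eq
        have h1 : b * (C * (d * e)) = T * e := by
          calc b * (C * (d * e)) = C * (b * (d * e)) := by
                rw [← mul_assoc, ← Cc b, mul_assoc]
            _ = C * ((d * b) * e) := by rw [← mul_assoc b d e, scs]
            _ = (C * (d * b)) * e := (mul_assoc _ _ _).symm
            _ = T * e := by rw [key]
        calc C * (a * b) * (C * (d * e)) = C * (a * (b * (C * (d * e)))) := by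
              rw [mul_assoc, mul_assoc]
          _ = C * (a * (T * e)) := by rw [h1]
          _ = C * (T * (a * e)) := by rw [← mul_assoc a T e, ← Tc a, mul_assoc]
          _ = T * (C * (a * e)) := by rw [← mul_assoc, Cc T, mul_assoc]
          _ = Q l₂ • (C * (a * e)) := by rw [hT, ← zsmul_eq_mul] }
  exact ⟨CliffordAlgebra.even.lift Q E, fun l₁ l₂ => by
    rw [CliffordAlgebra.even.lift_ι]
    exact hf l₁ l₂⟩
end
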